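/- For every even integer n ≥ 2 and every integer g with n ≤ g, there exists an ODAR(n,g), i.e., a partition of the set of all words of length n and weight 2 over ℤ_{g+1} into g² subsets such that each subset has cardinality C(n,2) and any two distinct words lying in the same subset have Hamming distance at least 3. -/

import Mathlib

/-- The weight of a word of length `m` over `ℤ_q` (represented as `Fin q`):
the number of nonzero coordinates. -/
def wordWeight {m q : ℕ} (x : Fin m → Fin q) : ℕ :=
  (Finset.univ.filter (fun i => (x i : ℕ) ≠ 0)).card

/-- The set `H(m)` of all words of length `m` and weight `2` over `ℤ_{g+1}`. -/
def weightTwoWords (m g : ℕ) : Finset (Fin m → Fin (g + 1)) :=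
  Finset.univ.filter (fun x => wordWeight x = 2)

/-- A partition of `H(m)` (words of length `m`, weight `2` over `ℤ_{g+1}`) into
`k` subsets, each of cardinality `s`, with pairwise Hamming distance at least
`3` inside each subset. -/
def HasDist3Partition (m g k s : ℕ) : Prop :=
  ∃ P : Fin k → Finset (Fin m → Fin (g + 1)),
    (∀ i j, i ≠ j → Disjoint (P i) (P j)) ∧
    (Finset.univ.biUnion P = weightTwoWords m g) ∧
    (∀ i, (P i).card = s) ∧
    (∀ i, ∀ x ∈ P i, ∀ y ∈ P i, x ≠ y → 3 ≤ hammingDist x y)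

/-- An `ODAR(m,g)`: a partition of `H(m)` into `g²` subsets, each of
cardinality `C(m,2)` and with pairwise Hamming distance at least 3. -/
def IsODAR (m g : ℕ) : Prop :=
  HasDist3Partition m g (g ^ 2) (m.choose 2)

/-- An `OF(m,g)`: a partition of `H(m)` into `g(m-1)` subsets, each of
cardinality `g·m/2` and with pairwise Hamming distance at least 3. -/
def IsOF (m g : ℕ) : Prop :=
  HasDist3Partition m g (g * (m - 1)) (g * m / 2)

/-!
The `g²` classes are indexed by `(s, d) ∈ ℤ_g²`, the nonzero symbols of `ℤ_{g+1}` standing for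
`ℤ_g`. Let `F : {0, …, g-1} → ℤ_g` run through the cycles of `x ↦ x + d` one after the other;
then `F` is a bijection, and `F p' = F p + d` forces `p' ≤ p + 1`. Class `(s, d)` contains, for
each pair of positions `i < j`, the word with entry `c = s + F i + F j` at `i` and `c + d` at `j`.
Entries and support determine `(s, d)` and `{i, j}`, so the classes partition `H(n)` into sets of
size `C(n, 2)`. Two words of one class with different supports can agree only at a shared
position `x`; this needs `F j = F l` for their other endpoints, or a step of `F` by `d` across a
gap of at least two positions, and `n ≤ g` rules out both.
-/

open Finset

section ChainEnum
variable {g : ℕ} [NeZero g]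

lemma ZMod.gcd_val_mul_addOrderOf (d : ZMod g) : g.gcd d.val * addOrderOf d = g := by
  rw [← ZMod.natCast_zmod_val d, ZMod.addOrderOf_coe _ (NeZero.ne g),
    ZMod.val_natCast_of_lt (ZMod.val_lt d)]
  exact Nat.mul_div_cancel' (Nat.gcd_dvd_left g d.val)

/-- Reduction modulo `gcd g d.val` kills `d`, which separates the `q`'s. -/
lemma ZMod.natCast_add_nsmul_injective {d : ZMod g} {q q' t t' : ℕ}
    (hq : q < g.gcd d.val) (hq' : q' < g.gcd d.val)
    (ht : t < addOrderOf d) (ht' : t' < addOrderOf d)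
    (h : (q : ZMod g) + t • d = q' + t' • d) : q = q' ∧ t = t' := by
  set c := g.gcd d.val
  have hcast : ∀ r : ℕ, ZMod.castHom (Nat.gcd_dvd_left g d.val) (ZMod c) (r • d) = 0 := by
    intro r
    rw [map_nsmul, ZMod.castHom_apply, ZMod.cast_eq_val,
      (ZMod.natCast_eq_zero_iff _ _).2 (Nat.gcd_dvd_right g d.val), smul_zero]
  have hqq : q = q' := by
    have := congrArg (ZMod.castHom (Nat.gcd_dvd_left g d.val) (ZMod c)) h
    simp only [map_add, map_natCast, hcast, add_zero] at this
    rwa [ZMod.natCast_eq_natCast_iff', Nat.mod_eq_of_lt hq, Nat.mod_eq_of_lt hq'] at this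
  subst hqq
  exact ⟨rfl, nsmul_injOn_Iio_addOrderOf ht ht' (add_left_cancel h)⟩

/-- Lists `ℤ_g` cycle by cycle under `x ↦ x + d`: there are `g.gcd d.val` cycles, each of
length `addOrderOf d`. -/
noncomputable def chainEnum (d : ZMod g) (p : ℕ) : ZMod g :=
  ((p / addOrderOf d : ℕ) : ZMod g) + (p % addOrderOf d) • d

lemma div_addOrderOf_lt {d : ZMod g} {p : ℕ} (hp : p < g) : p / addOrderOf d < g.gcd d.val := by
  have := ZMod.gcd_val_mul_addOrderOf d
  exact (Nat.div_lt_iff_lt_mul (addOrderOf_pos d)).2 (by rwa [this])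

lemma chainEnum_injOn (d : ZMod g) {p p' : ℕ} (hp : p < g) (hp' : p' < g)
    (h : chainEnum d p = chainEnum d p') : p = p' := by
  have hm := addOrderOf_pos d
  obtain ⟨hq, ht⟩ := ZMod.natCast_add_nsmul_injective (div_addOrderOf_lt hp)
    (div_addOrderOf_lt hp') (Nat.mod_lt _ hm) (Nat.mod_lt _ hm) h
  rw [← Nat.div_add_mod p (addOrderOf d), hq, ht, Nat.div_add_mod]

lemma le_succ_of_chainEnum_eq_add (d : ZMod g) {p p' : ℕ} (hp : p < g) (hp' : p' < g)
    (h : chainEnum d p' = chainEnum d p + d) : p' ≤ p + 1 := by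
  have hm := addOrderOf_pos d
  have hdiv := Nat.div_add_mod p (addOrderOf d)
  have hdiv' := Nat.div_add_mod p' (addOrderOf d)
  rw [chainEnum, chainEnum, add_assoc, ← succ_nsmul] at h
  obtain hlt | heq := Nat.lt_or_eq_of_le (Nat.mod_lt p hm)
  · obtain ⟨hq, ht⟩ := ZMod.natCast_add_nsmul_injective (div_addOrderOf_lt hp')
      (div_addOrderOf_lt hp) (Nat.mod_lt _ hm) hlt h
    rw [hq] at hdiv'
    omega
  · -- `d` closes the cycle: `m • d = 0 = 0 • d`
    rw [show p % addOrderOf d + 1 = addOrderOf d from heq, addOrderOf_nsmul_eq_zero,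
      ← zero_nsmul d] at h
    obtain ⟨hq, ht⟩ := ZMod.natCast_add_nsmul_injective (div_addOrderOf_lt hp')
      (div_addOrderOf_lt hp) (Nat.mod_lt _ hm) hm h
    rw [hq] at hdiv'
    omega

end ChainEnum

lemma three_le_card_union {α : Type*} [DecidableEq α] {A B : Finset α} (hA : #A = 2) (hB : #B = 2)
    (hAB : A ≠ B) : 3 ≤ #(A ∪ B) := by
  by_contra! h
  have hA' : A = A ∪ B := eq_of_subset_of_card_le subset_union_left (by omega)
  have hB' : B = A ∪ B := eq_of_subset_of_card_le subset_union_right (by omega)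
  exact hAB (hA'.trans hB'.symm)

lemma three_le_hammingDist_of_card_support_eq_two {ι β : Type*} [Fintype ι] [DecidableEq ι]
    [Zero β] [DecidableEq β] {w w' : ι → β} (hw : #{x | w x ≠ 0} = 2) (hw' : #{x | w' x ≠ 0} = 2)
    (hsupp : ({x | w x ≠ 0} : Finset ι) ≠ ({x | w' x ≠ 0} : Finset ι))
    (hsep : ∀ x, w x ≠ 0 → w' x ≠ 0 → w x ≠ w' x) : 3 ≤ hammingDist w w' := by
  refine (three_le_card_union hw hw' hsupp).trans (card_le_card fun x hx => ?_)
  simp only [mem_union, mem_filter, mem_univ, true_and] at hx ⊢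
  by_cases h : w x = 0 <;> by_cases h' : w' x = 0
  · tauto
  · rw [h]; exact Ne.symm h'
  · rw [h']; exact h
  · exact hsep x h h'

lemma eq_of_pair_eq_pair_of_lt {α : Type*} [LinearOrder α] {i j k l : α} (hij : i < j)
    (hkl : k < l) (h : ({i, j} : Finset α) = {k, l}) : i = k ∧ j = l := by
  have hi : i = k ∨ i = l := by simpa using congrArg (i ∈ ·) h
  have hj : j = k ∨ j = l := by simpa using congrArg (j ∈ ·) h
  rcases hi with rfl | rfl <;> rcases hj with rfl | rfl <;> simp_all [lt_asymm hij]

section PairWord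
variable {n g : ℕ}

lemma mem_weightTwoWords {w : Fin n → Fin (g + 1)} :
    w ∈ weightTwoWords n g ↔ #{x | w x ≠ 0} = 2 := by
  simp [weightTwoWords, wordWeight]

def pairWord (i j : Fin n) (a b : Fin (g + 1)) : Fin n → Fin (g + 1) :=
  fun x => if x = i then a else if x = j then b else 0

variable {i j k l : Fin n} {a b a' b' : Fin (g + 1)}

@[simp] lemma pairWord_left : pairWord i j a b i = a := if_pos rfl

@[simp] lemma pairWord_right (hij : i ≠ j) : pairWord i j a b j = b := by
  simp [pairWord, hij.symm]

lemma pairWord_of_ne {x : Fin n} (hi : x ≠ i) (hj : x ≠ j) : pairWord i j a b x = 0 := by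
  simp [pairWord, hi, hj]

lemma support_pairWord (hij : i ≠ j) (ha : a ≠ 0) (hb : b ≠ 0) :
    ({x | pairWord i j a b x ≠ 0} : Finset (Fin n)) = {i, j} := by
  ext x
  by_cases hi : x = i
  · subst hi; simp [ha]
  by_cases hj : x = j
  · subst hj; simp [hij, hb]
  simp [pairWord_of_ne hi hj, hi, hj]

lemma pairWord_mem_weightTwoWords (hij : i ≠ j) (ha : a ≠ 0) (hb : b ≠ 0) :
    pairWord i j a b ∈ weightTwoWords n g := by
  rw [mem_weightTwoWords, support_pairWord hij ha hb, card_pair hij]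

lemma exists_pairWord_eq {w : Fin n → Fin (g + 1)} (hw : w ∈ weightTwoWords n g) :
    ∃ i j, i < j ∧ w i ≠ 0 ∧ w j ≠ 0 ∧ pairWord i j (w i) (w j) = w := by
  obtain ⟨i, j, hij, hsupp⟩ := card_eq_two.1 (mem_weightTwoWords.1 hw)
  have hmem : ∀ x, w x ≠ 0 ↔ x = i ∨ x = j := by
    intro x
    simpa using congrArg (x ∈ ·) hsupp
  have hpair : ∀ i j, w i ≠ 0 → w j ≠ 0 → (∀ x, w x ≠ 0 → x = i ∨ x = j) →
      pairWord i j (w i) (w j) = w := by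
    intro i j _ _ hsub
    funext x
    by_cases hi : x = i
    · subst hi; simp
    by_cases hj : x = j
    · subst hj; simp [pairWord, hi]
    rw [pairWord_of_ne hi hj]
    by_contra h
    exact (hsub x (Ne.symm h)).elim hi hj
  have hwi := (hmem i).2 (.inl rfl)
  have hwj := (hmem j).2 (.inr rfl)
  rcases hij.lt_or_gt with h | h
  · exact ⟨i, j, h, hwi, hwj, hpair i j hwi hwj fun x hx => (hmem x).1 hx⟩
  · exact ⟨j, i, h, hwj, hwi, hpair j i hwj hwi fun x hx => ((hmem x).1 hx).symm⟩

lemma eq_or_eq_of_pairWord_ne_zero {x : Fin n} (h : pairWord i j a b x ≠ 0) : x = i ∨ x = j := by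
  by_contra! hx
  exact h (pairWord_of_ne hx.1 hx.2)

lemma pairWord_inj (hij : i < j) (hkl : k < l) (ha : a ≠ 0) (hb : b ≠ 0) (ha' : a' ≠ 0)
    (hb' : b' ≠ 0) (h : pairWord i j a b = pairWord k l a' b') :
    i = k ∧ j = l ∧ a = a' ∧ b = b' := by
  have hsupp := support_pairWord hij.ne ha hb
  rw [h, support_pairWord hkl.ne ha' hb'] at hsupp
  obtain ⟨rfl, rfl⟩ := eq_of_pair_eq_pair_of_lt hij hkl hsupp.symm
  refine ⟨rfl, rfl, by simpa using congrFun h i, ?_⟩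
  simpa [hij.ne] using congrFun h j

end PairWord

section ClassWord
variable {g : ℕ} [NeZero g]

/-- `z ↦ z + 1`, as a bijection from `ℤ_g` onto the nonzero symbols of `ℤ_{g+1}`. -/
def nonzeroSymbol (z : ZMod g) : Fin (g + 1) := ((ZMod.finEquiv g).symm z).succ

lemma nonzeroSymbol_injective : Function.Injective (nonzeroSymbol (g := g)) :=
  (Fin.succ_injective g).comp (ZMod.finEquiv g).symm.injective

lemma nonzeroSymbol_ne_zero (z : ZMod g) : nonzeroSymbol z ≠ 0 := Fin.succ_ne_zero _

lemma exists_nonzeroSymbol_eq {a : Fin (g + 1)} (ha : a ≠ 0) : ∃ z, nonzeroSymbol z = a := by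
  obtain ⟨y, rfl⟩ := Fin.exists_succ_eq.2 ha
  exact ⟨ZMod.finEquiv g y, by simp [nonzeroSymbol]⟩

variable {n : ℕ}

noncomputable def classWord (s d : ZMod g) (i j : Fin n) : Fin n → Fin (g + 1) :=
  pairWord i j (nonzeroSymbol (s + chainEnum d i + chainEnum d j))
    (nonzeroSymbol (s + chainEnum d i + chainEnum d j + d))

variable {s d s' d' : ZMod g} {i j k l : Fin n}

lemma classWord_mem_weightTwoWords (hij : i ≠ j) : classWord s d i j ∈ weightTwoWords n g :=
  pairWord_mem_weightTwoWords hij (nonzeroSymbol_ne_zero _) (nonzeroSymbol_ne_zero _)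

lemma classWord_inj (hij : i < j) (hkl : k < l) (h : classWord s d i j = classWord s' d' k l) :
    s = s' ∧ d = d' ∧ i = k ∧ j = l := by
  obtain ⟨rfl, rfl, ha, hb⟩ := pairWord_inj hij hkl (nonzeroSymbol_ne_zero _)
    (nonzeroSymbol_ne_zero _) (nonzeroSymbol_ne_zero _) (nonzeroSymbol_ne_zero _) h
  have ha := nonzeroSymbol_injective ha
  have hb := nonzeroSymbol_injective hb
  obtain rfl : d = d' := by rw [ha] at hb; exact add_left_cancel hb
  exact ⟨by simpa using ha, rfl, rfl, rfl⟩

lemma exists_classWord_eq {w : Fin n → Fin (g + 1)} (hw : w ∈ weightTwoWords n g) :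
    ∃ s d i j, i < j ∧ classWord s d i j = w := by
  obtain ⟨i, j, hij, hi, hj, hw⟩ := exists_pairWord_eq hw
  obtain ⟨a, ha⟩ := exists_nonzeroSymbol_eq hi
  obtain ⟨b, hb⟩ := exists_nonzeroSymbol_eq hj
  refine ⟨a - chainEnum (b - a) i - chainEnum (b - a) j, b - a, i, j, hij, ?_⟩
  rw [← hw, classWord, ← ha, ← hb]
  congr 2 <;> ring

lemma classWord_left : classWord s d i j i = nonzeroSymbol (s + chainEnum d i + chainEnum d j) :=
  pairWord_left

lemma classWord_right (hij : i ≠ j) :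
    classWord s d i j j = nonzeroSymbol (s + chainEnum d i + chainEnum d j + d) :=
  pairWord_right hij

lemma support_classWord (hij : i ≠ j) :
    ({x | classWord s d i j x ≠ 0} : Finset (Fin n)) = {i, j} :=
  support_pairWord hij (nonzeroSymbol_ne_zero _) (nonzeroSymbol_ne_zero _)

lemma three_le_hammingDist_classWord (hng : n ≤ g) (hij : i < j) (hkl : k < l)
    (hne : (i, j) ≠ (k, l)) : 3 ≤ hammingDist (classWord s d i j) (classWord s d k l) := by
  have hF : ∀ {p p' : Fin n}, chainEnum d p = chainEnum d p' → p = p' := fun h =>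
    Fin.ext (chainEnum_injOn d (by omega) (by omega) h)
  have hstep : ∀ {p p' : Fin n}, chainEnum d p' = chainEnum d p + d → (p' : ℕ) ≤ p + 1 :=
    fun h => le_succ_of_chainEnum_eq_add d (by omega) (by omega) h
  refine three_le_hammingDist_of_card_support_eq_two
    (by rw [support_classWord hij.ne, card_pair hij.ne])
    (by rw [support_classWord hkl.ne, card_pair hkl.ne])
    (by rw [support_classWord hij.ne, support_classWord hkl.ne]
        exact fun h => hne (Prod.ext_iff.2 (eq_of_pair_eq_pair_of_lt hij hkl h))) ?_
  intro x hx hx'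
  rcases eq_or_eq_of_pairWord_ne_zero hx with rfl | rfl <;>
    rcases eq_or_eq_of_pairWord_ne_zero hx' with rfl | rfl
  · rw [classWord_left, classWord_left, nonzeroSymbol_injective.ne_iff]
    exact fun h => hne (by rw [hF (by linear_combination h : chainEnum d j = chainEnum d l)])
  · rw [classWord_left, classWord_right hkl.ne, nonzeroSymbol_injective.ne_iff]
    exact fun h => absurd (hstep (by linear_combination h : chainEnum d j = chainEnum d k + d))
      (by omega)
  · rw [classWord_right hij.ne, classWord_left, nonzeroSymbol_injective.ne_iff]
    exact fun h => absurd (hstep (by linear_combination -h : chainEnum d l = chainEnum d i + d))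
      (by omega)
  · rw [classWord_right hij.ne, classWord_right hkl.ne, nonzeroSymbol_injective.ne_iff]
    exact fun h => hne (by rw [hF (by linear_combination h : chainEnum d i = chainEnum d k)])

end ClassWord

lemma hasDist3Partition_of_parametrization {m g k s : ℕ} {K ι : Type*} (e : Fin k ≃ K)
    (T : Finset ι) (hT : #T = s) (f : K → ι → Fin m → Fin (g + 1))
    (hinj : ∀ c c', ∀ p ∈ T, ∀ p' ∈ T, f c p = f c' p' → c = c' ∧ p = p')
    (hcover : ∀ w, w ∈ weightTwoWords m g ↔ ∃ c, ∃ p ∈ T, f c p = w)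
    (hdist : ∀ c, ∀ p ∈ T, ∀ p' ∈ T, p ≠ p' → 3 ≤ hammingDist (f c p) (f c p')) :
    HasDist3Partition m g k s := by
  classical
  refine ⟨fun r => T.image (f (e r)), ?_, ?_, ?_, ?_⟩
  · intro r r' hrr'
    rw [disjoint_left]
    rintro _ hw hw'
    obtain ⟨p, hp, rfl⟩ := mem_image.1 hw
    obtain ⟨p', hp', h⟩ := mem_image.1 hw'
    exact hrr' (e.injective (hinj _ _ _ hp' _ hp h).1.symm)
  · ext w
    simp [hcover, e.surjective.exists]
  · intro r
    rw [card_image_of_injOn fun p hp p' hp' h => (hinj _ _ _ hp _ hp' h).2, hT]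
  · intro r
    simp only [mem_image]
    rintro _ ⟨p, hp, rfl⟩ _ ⟨p', hp', rfl⟩ hne
    exact hdist _ _ hp _ hp' fun h => hne (h ▸ rfl)

lemma isODAR_of_le {n g : ℕ} [NeZero g] (hng : n ≤ g) : IsODAR n g := by
  refine hasDist3Partition_of_parametrization
    (Fintype.equivFinOfCardEq (by simp [ZMod.card, sq])).symm {p : Fin n × Fin n | p.1 < p.2}
    (by simpa using Fintype.card_product_filter_lt (α := Fin n))
    (fun (c : ZMod g × ZMod g) (p : Fin n × Fin n) => classWord c.1 c.2 p.1 p.2)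
    ?_ ?_ ?_
  · intro c c' p hp p' hp' h
    obtain ⟨hs, hd, hi, hj⟩ := classWord_inj (mem_filter.1 hp).2 (mem_filter.1 hp').2 h
    exact ⟨Prod.ext hs hd, Prod.ext hi hj⟩
  · intro w
    constructor
    · intro hw
      obtain ⟨s, d, i, j, hij, rfl⟩ := exists_classWord_eq hw
      exact ⟨(s, d), (i, j), by simpa using hij, rfl⟩
    · rintro ⟨c, p, hp, rfl⟩
      exact classWord_mem_weightTwoWords (mem_filter.1 hp).2.ne
  · intro c p hp p' hp' hne
    exact three_le_hammingDist_classWord hng (mem_filter.1 hp).2 (mem_filter.1 hp').2 hne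

theorem exists_ODAR_of_even_general (n g : ℕ) (hn2 : 2 ≤ n) (hng : n ≤ g) :
    IsODAR n g :=
  have : NeZero g := ⟨by omega⟩
  isODAR_of_le hng

/-- For every even `n ≥ 2` and every `g` with `n ≤ g`, an `ODAR(n,g)` exists. -/
theorem exists_ODAR_of_even (n g : ℕ) (hn2 : 2 ≤ n) (hne : Even n) (hng : n ≤ g) :
    IsODAR n g :=
  exists_ODAR_of_even_general n g hn2 hng
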